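/- arXiv:1009.0222 — 2 statements merged into one kernel-verified Lean document; each statement's English description precedes it below -/
import Mathlib

section
/- Let p > 1, λ > 0, q locally integrable, and let y be a nontrivial solution of -( (y')^{(p-1)} )' = (p-1)(λ - q(x)) y^{(p-1)}. Define the generalized Prüfer variables r(x) > 0 and θ(x) by y(x) = r(x) S_p(λ^{1/p} θ(x)) and y'(x) = λ^{1/p} r(x) S_p'(λ^{1/p} θ(x)). Then θ satisfies the first-order equation θ'(x) = 1 - (q(x)/λ) |S_p(λ^{1/p} θ(x))|^p. -/
/-!
Write `α = λ^{1/p}` and `u = α θ`. Differentiating `y = r S_p(u)` and comparing with the given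
`y' = α r S_p'(u)` yields `r' S_p(u) = α r S_p'(u) (1 - θ')`. Differentiating the flux
`(y')^{(p-1)} = (α r)^{p-1} (S_p')^{(p-1)}(u)` and using the two ODEs yields a second linear
relation between `r'` and `θ'`. Eliminating `r'` leaves
`θ' (|S_p|^p + |S_p'|^p) = |S_p'|^p + (1 - q/λ) |S_p|^p`, and the energy `|S_p|^p + |S_p'|^p`
has zero derivative by the ODE of `S_p`, so it equals its value `1` at `0`.
-/

open MeasureTheory Real Set Filter
open scoped Topology

/-- The signed power `f^{(r)} = |f|^r sgn f`. -/
noncomputable def sgnPow (r x : ℝ) : ℝ := |x| ^ r * Real.sign x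

lemma sgnPow_of_pos (e : ℝ) {x : ℝ} (hx : 0 < x) : sgnPow e x = x ^ e := by
  rw [sgnPow, Real.sign_of_pos hx, abs_of_pos hx, mul_one]

lemma sgnPow_of_neg (e : ℝ) {x : ℝ} (hx : x < 0) : sgnPow e x = -(-x) ^ e := by
  rw [sgnPow, Real.sign_of_neg hx, abs_of_neg hx, mul_neg_one]

@[simp] lemma sgnPow_zero_right (e : ℝ) : sgnPow e 0 = 0 := by
  simp [sgnPow]

lemma sgnPow_mul_of_pos {c : ℝ} (hc : 0 < c) (e x : ℝ) :
    sgnPow e (c * x) = c ^ e * sgnPow e x := by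
  rcases lt_trichotomy x 0 with hx | rfl | hx
  · rw [sgnPow_of_neg e hx, sgnPow_of_neg e (mul_neg_of_pos_of_neg hc hx), ← mul_neg,
      mul_rpow hc.le (by linarith)]
    ring
  · simp
  · rw [sgnPow_of_pos e hx, sgnPow_of_pos e (mul_pos hc hx), mul_rpow hc.le hx.le]

lemma mul_sgnPow {e : ℝ} (he : e + 1 ≠ 0) (x : ℝ) : x * sgnPow e x = |x| ^ (e + 1) := by
  rcases lt_trichotomy x 0 with hx | rfl | hx
  · rw [sgnPow_of_neg e hx, abs_of_neg hx, rpow_add_one (by linarith)]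
    ring
  · simp [zero_rpow he]
  · rw [sgnPow_of_pos e hx, abs_of_pos hx, rpow_add_one hx.ne']
    ring

lemma abs_sgnPow {e : ℝ} (he : e ≠ 0) (x : ℝ) : |sgnPow e x| = |x| ^ e := by
  rcases lt_trichotomy x 0 with hx | rfl | hx
  · rw [sgnPow_of_neg e hx, abs_neg, abs_of_neg hx, abs_of_nonneg (rpow_nonneg (by linarith) e)]
  · simp [zero_rpow he]
  · rw [sgnPow_of_pos e hx, abs_of_pos hx, abs_of_nonneg (by positivity)]

lemma sgnPow_inv_sgnPow {e : ℝ} (he : e ≠ 0) (x : ℝ) : sgnPow e⁻¹ (sgnPow e x) = x := by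
  rcases lt_trichotomy x 0 with hx | rfl | hx
  · have hpos : 0 < (-x) ^ e := rpow_pos_of_pos (by linarith) e
    rw [sgnPow_of_neg e hx, sgnPow_of_neg _ (neg_neg_of_pos hpos), neg_neg,
      rpow_rpow_inv (by linarith) he, neg_neg]
  · simp
  · rw [sgnPow_of_pos e hx, sgnPow_of_pos _ (rpow_pos_of_pos hx e), rpow_rpow_inv hx.le he]

lemma hasDerivAt_abs_rpow_sgnPow {e : ℝ} (he : 1 < e) (x : ℝ) :
    HasDerivAt (fun t : ℝ => |t| ^ e) (e * sgnPow (e - 1) x) x := by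
  convert hasDerivAt_abs_rpow x he using 1
  rcases lt_trichotomy x 0 with hx | rfl | hx
  · rw [sgnPow_of_neg _ hx, abs_of_neg hx, show e - 1 = e - 2 + 1 by ring,
      rpow_add_one (by linarith)]
    ring
  · simp
  · rw [sgnPow_of_pos _ hx, abs_of_pos hx, show e - 1 = e - 2 + 1 by ring,
      rpow_add_one hx.ne']
    ring

-- `|u|^p = |u^{(p-1)}|^{p'}` for the conjugate exponent `p' = p/(p-1)`, and `(·)^{(p'-1)}`
-- inverts `(·)^{(p-1)}`.
lemma HasDerivAt.abs_rpow_of_sgnPow {p : ℝ} (hp : 1 < p) {φ : ℝ → ℝ} {d x : ℝ}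
    (h : HasDerivAt (fun t => sgnPow (p - 1) (φ t)) d x) :
    HasDerivAt (fun t => |φ t| ^ p) (p / (p - 1) * φ x * d) x := by
  have hp1 : p - 1 ≠ 0 := by linarith
  have hconj : 1 < p / (p - 1) := (one_lt_div (by linarith)).2 (by linarith)
  have hrewrite : ∀ t, |φ t| ^ p = |sgnPow (p - 1) (φ t)| ^ (p / (p - 1)) := fun t => by
    rw [abs_sgnPow hp1, ← rpow_mul (abs_nonneg _), mul_div_cancel₀ _ hp1]
  have hexp : p / (p - 1) - 1 = (p - 1)⁻¹ := by field_simp; ring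
  have h' := (hasDerivAt_abs_rpow_sgnPow hconj _).comp x h
  rw [hexp, sgnPow_inv_sgnPow hp1] at h'
  simp_rw [hrewrite]
  exact h'.congr_deriv (by ring)

theorem abs_rpow_add_abs_deriv_rpow_eq_one {p : ℝ} (hp : 1 < p) {S : ℝ → ℝ}
    (hS : Differentiable ℝ S)
    (hSODE : ∀ x, HasDerivAt (fun t => sgnPow (p - 1) (deriv S t))
      (-((p - 1) * sgnPow (p - 1) (S x))) x)
    (hS0 : S 0 = 0) (hS'0 : deriv S 0 = 1) (t : ℝ) :
    |S t| ^ p + |deriv S t| ^ p = 1 := by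
  have hp1 : p - 1 ≠ 0 := by linarith
  have henergy : ∀ x, HasDerivAt (fun t => |S t| ^ p + |deriv S t| ^ p) 0 x := fun x => by
    refine (((hasDerivAt_abs_rpow_sgnPow hp (S x)).comp x (hS x).hasDerivAt).add
      ((hSODE x).abs_rpow_of_sgnPow hp)).congr_deriv ?_
    field_simp
    ring
  have hconst := is_const_of_deriv_eq_zero (fun x => (henergy x).differentiableAt)
    (fun x => (henergy x).deriv) t 0
  simpa [hS0, hS'0, zero_rpow (by linarith : p ≠ 0)] using hconst

section Prufer

variable {S r θ y : ℝ → ℝ} {α x : ℝ}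

theorem prufer_amplitude_phase_eq (hS : DifferentiableAt ℝ S (α * θ x))
    (hr : DifferentiableAt ℝ r x) (hθ : DifferentiableAt ℝ θ x)
    (hy : ∀ t, y t = r t * S (α * θ t)) (hy' : deriv y x = α * r x * deriv S (α * θ x)) :
    deriv r x * S (α * θ x) = α * r x * deriv S (α * θ x) * (1 - deriv θ x) := by
  have hderiv : HasDerivAt y
      (deriv r x * S (α * θ x) + r x * (deriv S (α * θ x) * (α * deriv θ x))) x := by
    rw [show y = fun t => r t * S (α * θ t) from funext hy]
    exact hr.hasDerivAt.mul (hS.hasDerivAt.comp x (hθ.hasDerivAt.const_mul α))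
  linear_combination hy' - hderiv.deriv

theorem prufer_flux_eq {p c : ℝ} (hp : p ≠ 1) (hα : 0 < α)
    (hr : DifferentiableAt ℝ r x) (hθ : DifferentiableAt ℝ θ x) (hrpos : ∀ t, 0 < r t)
    (hSODE : HasDerivAt (fun t => sgnPow (p - 1) (deriv S t))
      (-((p - 1) * sgnPow (p - 1) (S (α * θ x)))) (α * θ x))
    (hyODE : HasDerivAt (fun t => sgnPow (p - 1) (deriv y t))
      (-((p - 1) * c * sgnPow (p - 1) (y x))) x)
    (hy : y x = r x * S (α * θ x)) (hy' : ∀ t, deriv y t = α * r t * deriv S (α * θ t)) :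
    α ^ (p - 1) * (deriv r x * sgnPow (p - 1) (deriv S (α * θ x))
      - α * r x * sgnPow (p - 1) (S (α * θ x)) * deriv θ x)
      = -(c * r x * sgnPow (p - 1) (S (α * θ x))) := by
  have hR := hrpos x
  have hflux : (fun t => sgnPow (p - 1) (deriv y t))
      = fun t => (α * r t) ^ (p - 1) * sgnPow (p - 1) (deriv S (α * θ t)) := by
    funext t
    rw [hy', sgnPow_mul_of_pos (mul_pos hα (hrpos t))]
  have hderiv := (((hr.hasDerivAt.const_mul α).rpow_const (Or.inl (mul_pos hα hR).ne')).mul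
    (hSODE.comp x (hθ.hasDerivAt.const_mul α))).unique (hflux ▸ hyODE)
  rw [hy, sgnPow_mul_of_pos hR, rpow_sub_one (mul_pos hα hR).ne', mul_rpow hα.le hR.le]
    at hderiv
  simp only [Function.comp_apply] at hderiv
  field_simp at hderiv
  linear_combination hderiv

end Prufer

theorem prufer_phase_deriv_eq {p α lam q R R' T' a b : ℝ} (hp : p ≠ 0) (hR : R ≠ 0)
    (hlam : α ^ (p - 1) * α = lam) (hlam0 : lam ≠ 0)
    (h1 : R' * a = α * R * b * (1 - T'))
    (h2 : α ^ (p - 1) * (R' * sgnPow (p - 1) b - α * R * sgnPow (p - 1) a * T')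
      = -((lam - q) * R * sgnPow (p - 1) a))
    (hab : |a| ^ p + |b| ^ p = 1) :
    T' = 1 - q / lam * |a| ^ p := by
  have hp1 : p - 1 + 1 ≠ 0 := by simpa using hp
  have ha := mul_sgnPow hp1 a
  have hb := mul_sgnPow hp1 b
  rw [sub_add_cancel] at ha hb
  -- `α^{p-1} b^{(p-1)} h1 - a h2`, then `x x^{(p-1)} = |x|^p` and `|a|^p + |b|^p = 1`
  have key : R * (lam * T') = R * (lam - q * |a| ^ p) := by
    linear_combination α ^ (p - 1) * sgnPow (p - 1) b * h1 - a * h2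
      + (lam * R - lam * R * T') * hab
      + (R * b * sgnPow (p - 1) b * (1 - T') - R * T' * a * sgnPow (p - 1) a) * hlam
      + (lam * R - lam * R * T' - q * R) * ha + (lam * R - lam * R * T') * hb
  field_simp
  linear_combination mul_left_cancel₀ hR key

theorem prufer_phase_equation_general (p lam : ℝ) (hp : 1 < p) (hlam : 0 < lam)
    (q : ℝ → ℝ)
    (S : ℝ → ℝ) (hSdiff : Differentiable ℝ S)
    (hSODE : ∀ x : ℝ, HasDerivAt (fun t => sgnPow (p - 1) (deriv S t))
      (-((p - 1) * sgnPow (p - 1) (S x))) x)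
    (hS0 : S 0 = 0) (hS'0 : deriv S 0 = 1)
    (y r θ : ℝ → ℝ)
    (hyODE : ∀ x : ℝ, HasDerivAt (fun t => sgnPow (p - 1) (deriv y t))
      (-((p - 1) * (lam - q x) * sgnPow (p - 1) (y x))) x)
    (hrdiff : Differentiable ℝ r) (hθdiff : Differentiable ℝ θ)
    (hrpos : ∀ x, 0 < r x)
    (hy : ∀ x, y x = r x * S (lam ^ (1 / p) * θ x))
    (hy' : ∀ x, deriv y x = lam ^ (1 / p) * r x * deriv S (lam ^ (1 / p) * θ x)) :
    ∀ x : ℝ, HasDerivAt θ (1 - q x / lam * |S (lam ^ (1 / p) * θ x)| ^ p) x := by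
  intro x
  set α := lam ^ (1 / p)
  have hα : 0 < α := rpow_pos_of_pos hlam _
  have hαp : α ^ (p - 1) * α = lam := by
    rw [← rpow_add_one hα.ne', sub_add_cancel, ← rpow_mul hlam.le,
      one_div_mul_cancel (by linarith), rpow_one]
  have h1 := prufer_amplitude_phase_eq (hSdiff _) (hrdiff x) (hθdiff x) hy (hy' x)
  have h2 := prufer_flux_eq hp.ne' hα (hrdiff x) (hθdiff x) hrpos (hSODE _) (hyODE x)
    (hy x) hy'
  have hab := abs_rpow_add_abs_deriv_rpow_eq_one hp hSdiff hSODE hS0 hS'0 (α * θ x)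
  rw [← prufer_phase_deriv_eq (by linarith) (hrpos x).ne' hαp hlam.ne' h1 h2 hab]
  exact (hθdiff x).hasDerivAt

/-- the generalized Prüfer phase `θ` satisfies
`θ' = 1 - (q/λ) |S_p(λ^{1/p} θ)|^p`. -/
theorem prufer_phase_equation (p lam : ℝ) (hp : 1 < p) (hlam : 0 < lam)
    (q : ℝ → ℝ) (hq : MeasureTheory.LocallyIntegrable q)
    (S : ℝ → ℝ) (hSdiff : Differentiable ℝ S)
    (hSODE : ∀ x : ℝ, HasDerivAt (fun t => sgnPow (p - 1) (deriv S t))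
      (-((p - 1) * sgnPow (p - 1) (S x))) x)
    (hS0 : S 0 = 0) (hS'0 : deriv S 0 = 1)
    (y r θ : ℝ → ℝ)
    (hydiff : Differentiable ℝ y)
    (hnontriv : ∃ x, y x ≠ 0)
    (hyODE : ∀ x : ℝ, HasDerivAt (fun t => sgnPow (p - 1) (deriv y t))
      (-((p - 1) * (lam - q x) * sgnPow (p - 1) (y x))) x)
    (hrdiff : Differentiable ℝ r) (hθdiff : Differentiable ℝ θ)
    (hrpos : ∀ x, 0 < r x)
    (hy : ∀ x, y x = r x * S (lam ^ (1 / p) * θ x))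
    (hy' : ∀ x, deriv y x = lam ^ (1 / p) * r x * deriv S (lam ^ (1 / p) * θ x)) :
    ∀ x : ℝ, HasDerivAt θ (1 - q x / lam * |S (lam ^ (1 / p) * θ x)| ^ p) x :=
  prufer_phase_equation_general p lam hp hlam q S hSdiff hSODE hS0 hS'0 y r θ hyODE hrdiff hθdiff
    hrpos hy hy'
end

section
/- Let q ∈ L^1(0,1) and let (λ_n) be a sequence of positive reals with λ_n^{1/p} = O(n) and λ_n → ∞. Suppose for each n, θ_n: [0,1] → R is absolutely continuous with θ_n'(x) = 1 - (q(x)/λ_n)|S_p(λ_n^{1/p} θ_n(x))|^p, and suppose x_k^n satisfy θ_n(x_k^n) = k π̂ / λ_n^{1/p} with 0 ≤ x_1^n < ... < x_{n-1}^n ≤ 1. Define φ_n(x) = |S_p(λ_n^{1/p} θ_n(x))|^p - 1/p. Then ∫_{x_k^n}^{x_{k+1}^n} φ_n(x) dx = O(1/λ_n) = o(1/n), uniformly in k = 1, ..., n-2. -/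
open MeasureTheory Real Set Filter intervalIntegral
open scoped Topology

/-- The generalized half-period `π̂ = 2π/(p sin(π/p))`. -/
noncomputable def pihat (p : ℝ) : ℝ := 2 * Real.pi / (p * Real.sin (Real.pi / p))

open scoped NNReal

/-! With `μ = λ^{1/p}` and `w = |S_p(μθ)|^p`, the function `Φ(y) = S_p(μy) S_p'(μy)^{(p-1)} / μ`
has derivative `1 - p w(y)`. The chain rule for the absolutely continuous phase `θ` therefore gives
`∫ (1 - p w) θ' = Φ(θ(x_{k+1})) - Φ(θ(x_k)) = 0` over a nodal interval, because `S_p` vanishes at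
the nodes. As `θ' = 1 - (q/λ) w`, what remains is `∫ φ = -(1/p) ∫ (1 - p w) (q/λ) w`, of size at
most `‖q‖₁/λ`. For the `o(1/n)` bound, the `n - 2` nodal intervals each carry phase `π̂/μ`, while
the phase grows by at most `1 + ‖q‖₁/λ` over `[0,1]`; hence `μ ≳ n` and `1/λ = O(n^{-p})`. -/

theorem LipschitzWith.comp_absolutelyContinuousOnInterval {X Y : Type*} [PseudoMetricSpace X]
    [PseudoMetricSpace Y] {Φ : X → Y} {K : ℝ≥0} (hΦ : LipschitzWith K Φ) {f : ℝ → X}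
    {a b : ℝ} (hf : AbsolutelyContinuousOnInterval f a b) :
    AbsolutelyContinuousOnInterval (Φ ∘ f) a b := by
  refine squeeze_zero (fun E => Finset.sum_nonneg fun _ _ => dist_nonneg) (fun E => ?_)
    (by simpa using Tendsto.const_mul (K : ℝ) hf)
  rw [Finset.mul_sum]
  exact Finset.sum_le_sum fun i _ => hΦ.dist_le_mul _ _

theorem integral_comp_mul_eq_sub_of_sub_eq_integral {Φ Φ' g θ : ℝ → ℝ} {K : ℝ≥0} {a b : ℝ}
    (hΦ : ∀ y, HasDerivAt Φ (Φ' y) y) (hΦK : LipschitzWith K Φ)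
    (hg : IntervalIntegrable g volume a b)
    (hθ : ∀ t ∈ uIcc a b, θ t - θ a = ∫ s in a..t, g s) :
    ∫ t in a..b, Φ' (θ t) * g t = Φ (θ b) - Φ (θ a) := by
  set F : ℝ → ℝ := fun t => θ a + ∫ s in a..t, g s
  have hFθ : ∀ t ∈ uIcc a b, F t = θ t := fun t ht => by linarith [hθ t ht]
  have hac : AbsolutelyContinuousOnInterval (Φ ∘ F) a b :=
    (hΦK.comp (isometry_add_left (θ a)).lipschitz).comp_absolutelyContinuousOnInterval
      (hg.absolutelyContinuousOnInterval_intervalIntegral left_mem_uIcc)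
  calc ∫ t in a..b, Φ' (θ t) * g t = ∫ t in a..b, deriv (Φ ∘ F) t := by
        refine integral_congr_ae ?_
        filter_upwards [hg.ae_hasDerivAt_integral] with t ht htab
        have htI : t ∈ uIcc a b := uIoc_subset_uIcc htab
        rw [((hΦ _).comp t ((ht htI a left_mem_uIcc).const_add (θ a))).deriv, ← hFθ t htI]
    _ = Φ (θ b) - Φ (θ a) := by
        rw [hac.integral_deriv_eq_sub, Function.comp_apply, Function.comp_apply,
          hFθ b right_mem_uIcc, hFθ a left_mem_uIcc]

theorem integrableOn_Ioc_of_forall_lt {f h : ℝ → ℝ} {a b : ℝ} (hh : IntegrableOn h (Ioc a b))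
    (hfh : ∀ t, |f t| ≤ h t) (hf : ∀ c < b, IntegrableOn f (Ioc a c)) :
    IntegrableOn f (Ioc a b) := by
  have hlt : ∀ n : ℕ, b - 1 / (n + 1) < b := fun n => by
    have : (0:ℝ) < 1 / (n + 1) := by positivity
    linarith
  refine integrableOn_Ioc_of_intervalIntegral_norm_bounded_right (l := atTop)
    (b := fun n : ℕ => b - 1 / (n + 1)) (I := ∫ t in Ioc a b, h t)
    (fun n => hf _ (hlt n)) ?_ (Eventually.of_forall fun n => ?_)
  · simpa using tendsto_one_div_add_atTop_nhds_zero_nat.const_sub b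
  · have hsub : Ioc a (b - 1 / (n + 1)) ⊆ Ioc a b := Ioc_subset_Ioc_right (hlt n).le
    calc ∫ t in Ioc a (b - 1 / (n + 1)), ‖f t‖
        ≤ ∫ t in Ioc a (b - 1 / (n + 1)), h t :=
          setIntegral_mono_on (hf _ (hlt n)).norm (hh.mono_set hsub) measurableSet_Ioc
            fun t _ => hfh t
      _ ≤ ∫ t in Ioc a b, h t :=
          setIntegral_mono_set hh (Eventually.of_forall fun t => (abs_nonneg _).trans (hfh t))
            hsub.eventuallyLE

theorem integrableOn_Ioc_comp_of_sub_eq_integral {G : ℝ → ℝ → ℝ} {θ h : ℝ → ℝ} {a b : ℝ}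
    (hh : IntegrableOn h (Ioc a b)) (hGh : ∀ t y, |G t y| ≤ h t)
    (hG : ∀ y, IntegrableOn (fun t => G t y) (Ioc a b))
    (hθ : ∀ t ∈ Icc a b, θ t - θ a = ∫ s in a..t, G s (θ s)) :
    IntegrableOn (fun t => G t (θ t)) (Ioc a b) := by
  rcases lt_or_ge b a with hba | hab
  · simp [Ioc_eq_empty_of_le hba.le]
  set I := {c | c ≤ b ∧ IntegrableOn (fun t => G t (θ t)) (Ioc a c)}
  have haI : a ∈ I := ⟨hab, by simp⟩
  have hI : BddAbove I := ⟨b, fun c hc => hc.1⟩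
  set β := sSup I
  have haβ : a ≤ β := le_csSup hI haI
  have hβb : β ≤ b := csSup_le ⟨a, haI⟩ fun c hc => hc.1
  have hleft : IntegrableOn (fun t => G t (θ t)) (Ioc a β) := by
    refine integrableOn_Ioc_of_forall_lt (hh.mono_set (Ioc_subset_Ioc_right hβb))
      (fun t => hGh t _) fun c hc => ?_
    obtain ⟨c', hc'I, hcc'⟩ := exists_lt_of_lt_csSup ⟨a, haI⟩ hc
    exact hc'I.2.mono_set (Ioc_subset_Ioc_right hcc'.le)
  -- beyond `β` the integrals defining `θ` are junk, so `θ` is frozen at `θ a`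
  have hfrozen : ∀ t ∈ Ioc β b, θ t = θ a := by
    intro t ht
    have hnot : ¬ IntervalIntegrable (fun s => G s (θ s)) volume a t := by
      rw [intervalIntegrable_iff_integrableOn_Ioc_of_le (haβ.trans ht.1.le)]
      exact fun hint => (le_csSup hI ⟨ht.2, hint⟩).not_gt ht.1
    linarith [hθ t ⟨haβ.trans ht.1.le, ht.2⟩, integral_undef hnot]
  have hright : IntegrableOn (fun t => G t (θ t)) (Ioc β b) :=
    ((hG (θ a)).mono_set (Ioc_subset_Ioc_left haβ)).congr_fun
      (fun t ht => by simp only [hfrozen t ht]) measurableSet_Ioc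
  rw [← Ioc_union_Ioc_eq_Ioc haβ hβb]
  exact hleft.union hright

section PhaseEquation

variable {W r θ : ℝ → ℝ} {a b : ℝ}

theorem intervalIntegrable_phase (hab : a ≤ b) (hW : ∀ y, W y ∈ Icc 0 1)
    (hr : IntervalIntegrable r volume a b)
    (hθ : ∀ t ∈ Icc a b, θ t - θ a = ∫ s in a..t, (1 - r s * W (θ s))) :
    IntervalIntegrable (fun t => 1 - r t * W (θ t)) volume a b := by
  rw [intervalIntegrable_iff_integrableOn_Ioc_of_le hab] at hr ⊢
  refine integrableOn_Ioc_comp_of_sub_eq_integral (G := fun t y => 1 - r t * W y)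
    (h := fun t => 1 + |r t|) ((integrableOn_const measure_Ioc_lt_top.ne).add hr.abs)
    (fun t y => ?_) (fun y => (integrableOn_const measure_Ioc_lt_top.ne).sub (hr.mul_const _)) hθ
  obtain ⟨h0, h1⟩ := hW y
  have hrW : |r t * W y| ≤ |r t| := by
    rw [abs_mul, abs_of_nonneg h0]; exact mul_le_of_le_one_right (abs_nonneg _) h1
  rw [abs_le]
  constructor <;> linarith [abs_le.1 hrW]

theorem sub_le_add_integral_abs_of_phase (hab : a ≤ b) (hW : ∀ y, W y ∈ Icc 0 1)
    (hr : IntervalIntegrable r volume a b)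
    (hθ : ∀ t ∈ Icc a b, θ t - θ a = ∫ s in a..t, (1 - r s * W (θ s))) :
    θ b - θ a ≤ (b - a) + ∫ t in a..b, |r t| := by
  have hconst : IntervalIntegrable (fun _ => (1:ℝ)) volume a b := intervalIntegrable_const
  calc θ b - θ a = ∫ t in a..b, (1 - r t * W (θ t)) := hθ b ⟨hab, le_rfl⟩
    _ ≤ ∫ t in a..b, (1 + |r t|) :=
        integral_mono_on hab (intervalIntegrable_phase hab hW hr hθ) (hconst.add hr.abs)
          fun t _ => by
            obtain ⟨h0, h1⟩ := hW (θ t)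
            nlinarith [le_abs_self (r t), neg_abs_le (r t)]
    _ = (b - a) + ∫ t in a..b, |r t| := by simp [integral_add hconst hr.abs]

theorem continuousOn_of_phase (hab : a ≤ b) (hW : ∀ y, W y ∈ Icc 0 1)
    (hr : IntervalIntegrable r volume a b)
    (hθ : ∀ t ∈ Icc a b, θ t - θ a = ∫ s in a..t, (1 - r s * W (θ s))) :
    ContinuousOn θ (uIcc a b) :=
  (((intervalIntegrable_phase hab hW hr hθ).absolutelyContinuousOnInterval_intervalIntegral
    left_mem_uIcc).continuousOn.const_add (θ a)).congr fun t ht => by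
      linarith [hθ t (by rwa [← uIcc_of_le hab])]

theorem integral_mul_phase_eq_zero {p : ℝ} (hp : 1 ≤ p) {Φ : ℝ → ℝ} (hab : a ≤ b)
    (hW : ∀ y, W y ∈ Icc 0 1) (hΦ : ∀ y, HasDerivAt Φ (1 - p * W y) y)
    (hr : IntervalIntegrable r volume a b)
    (hθ : ∀ t ∈ Icc a b, θ t - θ a = ∫ s in a..t, (1 - r s * W (θ s)))
    (hΦθ : Φ (θ a) = Φ (θ b)) :
    ∫ t in a..b, (1 - p * W (θ t)) * (1 - r t * W (θ t)) = 0 := by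
  have hΦK : LipschitzWith (Real.toNNReal p) Φ :=
    lipschitzWith_of_nnnorm_deriv_le (fun y => (hΦ y).differentiableAt) fun y => by
      rw [(hΦ y).deriv, ← NNReal.coe_le_coe, coe_nnnorm, Real.coe_toNNReal _ (by linarith),
        Real.norm_eq_abs, abs_le]
      obtain ⟨h0, h1⟩ := hW y
      constructor <;> nlinarith
  rw [integral_comp_mul_eq_sub_of_sub_eq_integral hΦ hΦK (intervalIntegrable_phase hab hW hr hθ)
    (fun t ht => hθ t (by rwa [← uIcc_of_le hab])), hΦθ, sub_self]

theorem abs_integral_sub_inv_le_integral_abs {p : ℝ} (hp : 1 ≤ p) {Φ : ℝ → ℝ} (hab : a ≤ b)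
    (hWc : Continuous W) (hW : ∀ y, W y ∈ Icc 0 1) (hΦ : ∀ y, HasDerivAt Φ (1 - p * W y) y)
    (hr : IntervalIntegrable r volume a b)
    (hθ : ∀ t ∈ Icc a b, θ t - θ a = ∫ s in a..t, (1 - r s * W (θ s)))
    (hΦθ : Φ (θ a) = Φ (θ b)) :
    |∫ t in a..b, (W (θ t) - 1 / p)| ≤ ∫ t in a..b, |r t| := by
  have hp0 : 0 < p := one_pos.trans_le hp
  have hWθ : ContinuousOn (fun t => W (θ t)) (uIcc a b) :=
    hWc.comp_continuousOn (continuousOn_of_phase hab hW hr hθ)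
  have hA : ContinuousOn (fun t => 1 - p * W (θ t)) (uIcc a b) :=
    continuousOn_const.sub (continuousOn_const.mul hWθ)
  have hAg : IntervalIntegrable (fun t => (1 - p * W (θ t)) * (1 - r t * W (θ t))) volume a b :=
    (intervalIntegrable_phase hab hW hr hθ).continuousOn_mul hA
  have hrV : IntervalIntegrable (fun t => r t * ((1 - p * W (θ t)) * W (θ t))) volume a b :=
    hr.mul_continuousOn (hA.mul hWθ)
  have hsplit : ∫ t in a..b, (W (θ t) - 1 / p)
      = ∫ t in a..b, -(1 / p) * (r t * ((1 - p * W (θ t)) * W (θ t))) := by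
    calc ∫ t in a..b, (W (θ t) - 1 / p)
        = ∫ t in a..b, (-(1 / p) * ((1 - p * W (θ t)) * (1 - r t * W (θ t)))
            + -(1 / p) * (r t * ((1 - p * W (θ t)) * W (θ t)))) :=
          integral_congr fun t _ => by field_simp; ring
      _ = _ := by
          rw [integral_add (hAg.const_mul _) (hrV.const_mul _),
            intervalIntegral.integral_const_mul, integral_mul_phase_eq_zero hp hab hW hΦ hr hθ hΦθ,
            mul_zero, zero_add]
  rw [hsplit, ← Real.norm_eq_abs]
  refine norm_integral_le_of_norm_le hab (Eventually.of_forall fun t _ => ?_) hr.abs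
  obtain ⟨h0, h1⟩ := hW (θ t)
  have hV : |(1 - p * W (θ t)) * W (θ t)| ≤ p := by
    have hW2 : W (θ t) * W (θ t) ≤ 1 := mul_le_one₀ h1 h0 h1
    rw [abs_le]
    constructor <;> nlinarith [mul_nonneg h0 h0]
  rw [Real.norm_eq_abs, abs_mul, abs_mul, abs_neg, abs_of_pos (by positivity : 0 < 1 / p)]
  calc 1 / p * (|r t| * |(1 - p * W (θ t)) * W (θ t)|) ≤ 1 / p * (|r t| * p) := by gcongr
    _ = |r t| := by field_simp

theorem sub_two_mul_le_of_nodes {W r θ : ℝ → ℝ} {x : ℕ → ℝ} {n : ℕ} {c : ℝ} (hn : 3 ≤ n)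
    (hW : ∀ y, W y ∈ Icc 0 1) (hr : IntervalIntegrable r volume 0 1)
    (hθ : ∀ a ∈ Icc (0 : ℝ) 1, ∀ b ∈ Icc (0 : ℝ) 1,
      θ b - θ a = ∫ s in a..b, (1 - r s * W (θ s)))
    (hxmem : ∀ k, 1 ≤ k → k ≤ n - 1 → x k ∈ Icc (0 : ℝ) 1)
    (hxmono : ∀ k, 1 ≤ k → k + 1 ≤ n - 1 → x k < x (k + 1))
    (hxnode : ∀ k, 1 ≤ k → k ≤ n - 1 → θ (x k) = k * c) :
    ((n : ℝ) - 2) * c ≤ 1 + ∫ t in (0 : ℝ)..1, |r t| := by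
  have hmono : MonotoneOn x (Icc 1 (n - 1)) :=
    monotoneOn_of_le_add_one ordConnected_Icc fun k _ hk hk1 => (hxmono k hk.1 hk1.2).le
  have ha := hxmem 1 le_rfl (by omega)
  have hb := hxmem (n - 1) (by omega) le_rfl
  have hab : x 1 ≤ x (n - 1) := hmono ⟨le_rfl, by omega⟩ ⟨by omega, le_rfl⟩ (by omega)
  have hr' : IntervalIntegrable r volume (x 1) (x (n - 1)) :=
    hr.mono_set (uIcc_subset_uIcc (Icc_subset_uIcc ha) (Icc_subset_uIcc hb))
  have hgap := sub_le_add_integral_abs_of_phase hab hW hr'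
    fun t ht => hθ _ ha t ⟨ha.1.trans ht.1, ht.2.trans hb.2⟩
  have hsub : ∫ t in (x 1)..(x (n - 1)), |r t| ≤ ∫ t in (0 : ℝ)..1, |r t| :=
    integral_mono_interval ha.1 hab hb.2 (Eventually.of_forall fun _ => abs_nonneg _) hr.abs
  rw [hxnode 1 le_rfl (by omega), hxnode (n - 1) (by omega) le_rfl,
    Nat.cast_sub (by omega : 1 ≤ n)] at hgap
  push_cast at hgap
  linarith [ha.1, hb.2]

end PhaseEquation

theorem pihat_pos {p : ℝ} (hp : 1 < p) : 0 < pihat p := by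
  have hsin : 0 < Real.sin (π / p) :=
    Real.sin_pos_of_pos_of_lt_pi (by positivity) (div_lt_self Real.pi_pos hp)
  unfold pihat
  positivity

theorem self_mul_sgnPow {r : ℝ} (hr : 0 < r) (x : ℝ) : x * sgnPow r x = |x| ^ (r + 1) := by
  rcases lt_trichotomy x 0 with hx | rfl | hx
  · rw [sgnPow, Real.sign_of_neg hx, Real.rpow_add_one (abs_pos.2 hx.ne).ne', abs_of_neg hx]
    ring
  · simp [sgnPow, Real.zero_rpow (by positivity : r + 1 ≠ 0)]
  · rw [sgnPow, Real.sign_of_pos hx, abs_of_pos hx, Real.rpow_add_one hx.ne']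
    ring

section GeneralizedSine

variable {p : ℝ} {S : ℝ → ℝ}

theorem abs_deriv_rpow_add_abs_rpow_eq_one (hp : 1 < p) (hSdiff : Differentiable ℝ S)
    (hSODE : ∀ x, HasDerivAt (fun t => sgnPow (p - 1) (deriv S t))
      (-((p - 1) * sgnPow (p - 1) (S x))) x)
    (hSprod : ∀ x, HasDerivAt (fun t => S t * sgnPow (p - 1) (deriv S t))
      (1 - p * |S x| ^ p) x) (y : ℝ) :
    |deriv S y| ^ p + |S y| ^ p = 1 := by
  have hp1 : 0 < p - 1 := by linarith
  have h := (hSprod y).unique ((hSdiff y).hasDerivAt.mul (hSODE y))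
  rw [self_mul_sgnPow hp1, sub_add_cancel, mul_neg, mul_left_comm, self_mul_sgnPow hp1,
    sub_add_cancel] at h
  linarith

theorem abs_rpow_mem_Icc_zero_one (hp : 1 < p) (hSdiff : Differentiable ℝ S)
    (hSODE : ∀ x, HasDerivAt (fun t => sgnPow (p - 1) (deriv S t))
      (-((p - 1) * sgnPow (p - 1) (S x))) x)
    (hSprod : ∀ x, HasDerivAt (fun t => S t * sgnPow (p - 1) (deriv S t))
      (1 - p * |S x| ^ p) x) (y : ℝ) :
    |S y| ^ p ∈ Icc 0 1 :=
  ⟨by positivity, by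
    linarith [abs_deriv_rpow_add_abs_rpow_eq_one hp hSdiff hSODE hSprod y,
      Real.rpow_nonneg (abs_nonneg (deriv S y)) p]⟩

end GeneralizedSine

theorem abs_integral_abs_rpow_sub_le {p μ lam a b : ℝ} {S q θ : ℝ → ℝ} (hp : 1 < p)
    (hμ : 0 < μ) (hlam : 0 < lam) (hSdiff : Differentiable ℝ S) (hS : ∀ y, |S y| ^ p ∈ Icc 0 1)
    (hSprod : ∀ x, HasDerivAt (fun t => S t * sgnPow (p - 1) (deriv S t))
      (1 - p * |S x| ^ p) x)
    (hq : IntervalIntegrable q volume a b) (hab : a ≤ b)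
    (hθ : ∀ t ∈ Icc a b, θ t - θ a = ∫ s in a..t, (1 - q s / lam * |S (μ * θ s)| ^ p))
    (ha : S (μ * θ a) = 0) (hb : S (μ * θ b) = 0) :
    |∫ t in a..b, (|S (μ * θ t)| ^ p - 1 / p)| ≤ (∫ t in a..b, |q t|) / lam := by
  have hΦ : ∀ y, HasDerivAt (fun y => S (μ * y) * sgnPow (p - 1) (deriv S (μ * y)) / μ)
      (1 - p * |S (μ * y)| ^ p) y := fun y => by
    have h := ((hSprod (μ * y)).comp y ((hasDerivAt_id y).const_mul μ)).div_const μ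
    rwa [mul_one, mul_div_cancel_right₀ _ hμ.ne'] at h
  have hWc : Continuous fun y => |S (μ * y)| ^ p :=
    (hSdiff.continuous.comp (continuous_const_mul μ)).abs.rpow_const fun _ => Or.inr (by linarith)
  simpa [abs_div, abs_of_pos hlam, intervalIntegral.integral_div] using
    abs_integral_sub_inv_le_integral_abs hp.le hab hWc (fun y => hS _) hΦ (hq.div_const lam) hθ
      (by simp [ha, hb])

theorem tendsto_natCast_div_of_eventually_mul_le_rpow {p c : ℝ} {lam : ℕ → ℝ} (hp : 1 < p)
    (hc : 0 < c) (hlam : ∀ n, 0 < lam n) (h : ∀ᶠ n : ℕ in atTop, c * n ≤ lam n ^ (1 / p)) :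
    Tendsto (fun n : ℕ => (n : ℝ) / lam n) atTop (𝓝 0) := by
  have hlim : Tendsto (fun n : ℕ => c⁻¹ * (c * n) ^ (-(p - 1))) atTop (𝓝 0) := by
    simpa using ((tendsto_rpow_neg_atTop (by linarith : 0 < p - 1)).comp
      (tendsto_natCast_atTop_atTop.const_mul_atTop hc)).const_mul c⁻¹
  refine squeeze_zero' (Eventually.of_forall fun n => div_nonneg n.cast_nonneg (hlam n).le) ?_ hlim
  filter_upwards [h, eventually_gt_atTop 0] with n hn hn0
  have hcn : 0 < c * n := by positivity
  have hpow : (c * n) ^ p ≤ lam n := by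
    calc (c * n) ^ p ≤ (lam n ^ (1 / p)) ^ p := rpow_le_rpow hcn.le hn (by linarith)
      _ = lam n := by rw [← rpow_mul (hlam n).le, one_div_mul_cancel (by linarith), rpow_one]
  calc (n : ℝ) / lam n ≤ n / (c * n) ^ p :=
        div_le_div_of_nonneg_left n.cast_nonneg (by positivity) hpow
    _ = c⁻¹ * (c * n) ^ (-(p - 1)) := by
        rw [rpow_neg hcn.le, rpow_sub_one hcn.ne']
        field_simp

theorem eventually_mul_natCast_le_rpow {p c K : ℝ} {lam : ℕ → ℝ} (hc : 0 < c)
    (hlam : ∀ n, 0 < lam n) (hlamtop : Tendsto lam atTop atTop)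
    (hgap : ∀ n : ℕ, 3 ≤ n → ((n : ℝ) - 2) * (c / lam n ^ (1 / p)) ≤ 1 + K / lam n) :
    ∀ᶠ n : ℕ in atTop, c / 4 * n ≤ lam n ^ (1 / p) := by
  filter_upwards [hlamtop.eventually_ge_atTop K, eventually_ge_atTop 4] with n hK hn
  have hμ : 0 < lam n ^ (1 / p) := rpow_pos_of_pos (hlam n) _
  have hK1 : K / lam n ≤ 1 := (div_le_one (hlam n)).2 hK
  have h := hgap n (by omega)
  rw [mul_div_assoc', div_le_iff₀ hμ] at h
  have hn4 : (4 : ℝ) ≤ n := by exact_mod_cast hn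
  nlinarith

theorem phi_integral_small_general (p : ℝ) (hp : 1 < p) (S : ℝ → ℝ)
    (hSdiff : Differentiable ℝ S)
    (hSODE : ∀ x : ℝ, HasDerivAt (fun t => sgnPow (p - 1) (deriv S t))
      (-((p - 1) * sgnPow (p - 1) (S x))) x)
    (hSzero : ∀ k : ℤ, S (k * pihat p) = 0)
    (hSprod : ∀ x : ℝ, HasDerivAt (fun t => S t * sgnPow (p - 1) (deriv S t))
      (1 - p * |S x| ^ p) x)
    (q : ℝ → ℝ) (hq : IntegrableOn q (Set.Ioo 0 1))
    (lam : ℕ → ℝ) (hlampos : ∀ n, 0 < lam n)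
    (hlamtop : Tendsto lam atTop atTop)
    (θ : ℕ → ℝ → ℝ)
    (hphase : ∀ n : ℕ, ∀ a ∈ Set.Icc (0:ℝ) 1, ∀ b ∈ Set.Icc (0:ℝ) 1,
      θ n b - θ n a =
        ∫ t in a..b, (1 - q t / lam n * |S ((lam n) ^ (1 / p) * θ n t)| ^ p))
    (x : ℕ → ℕ → ℝ)
    (hxmem : ∀ n : ℕ, ∀ k : ℕ, 1 ≤ k → k ≤ n - 1 → x n k ∈ Set.Icc (0:ℝ) 1)
    (hxmono : ∀ n : ℕ, ∀ k : ℕ, 1 ≤ k → k + 1 ≤ n - 1 → x n k < x n (k + 1))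
    (hxnode : ∀ n : ℕ, ∀ k : ℕ, 1 ≤ k → k ≤ n - 1 →
      θ n (x n k) = k * pihat p / (lam n) ^ (1 / p)) :
    (∃ C : ℝ, ∀ n : ℕ, ∀ k : ℕ, 1 ≤ k → k ≤ n - 2 →
      |∫ t in (x n k)..(x n (k + 1)),
          (|S ((lam n) ^ (1 / p) * θ n t)| ^ p - 1 / p)| ≤ C / lam n) ∧
    (∀ ε > 0, ∃ N : ℕ, ∀ n ≥ N, ∀ k : ℕ, 1 ≤ k → k ≤ n - 2 →
      |∫ t in (x n k)..(x n (k + 1)),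
          (|S ((lam n) ^ (1 / p) * θ n t)| ^ p - 1 / p)| ≤ ε / n) := by
  have hS := abs_rpow_mem_Icc_zero_one hp hSdiff hSODE hSprod
  have hq01 : IntervalIntegrable q volume 0 1 :=
    (intervalIntegrable_iff_integrableOn_Ioo_of_le zero_le_one).2 hq
  set K := ∫ t in (0 : ℝ)..1, |q t|
  have hμ : ∀ n, 0 < lam n ^ (1 / p) := fun n => rpow_pos_of_pos (hlampos n) _
  have hnode : ∀ n k, 1 ≤ k → k ≤ n - 1 → θ n (x n k) = k * (pihat p / lam n ^ (1 / p)) :=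
    fun n k hk1 hk => (hxnode n k hk1 hk).trans (mul_div_assoc _ _ _)
  have hzero : ∀ n k, 1 ≤ k → k ≤ n - 1 → S (lam n ^ (1 / p) * θ n (x n k)) = 0 := by
    intro n k hk1 hk
    rw [hnode n k hk1 hk, mul_left_comm, mul_div_cancel₀ _ (hμ n).ne']
    exact_mod_cast hSzero k
  have hnodal : ∀ n k, 1 ≤ k → k ≤ n - 2 → |∫ t in (x n k)..(x n (k + 1)),
      (|S ((lam n) ^ (1 / p) * θ n t)| ^ p - 1 / p)| ≤ K / lam n := by
    intro n k hk1 hk2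
    have ha := hxmem n k hk1 (by omega)
    have hb := hxmem n (k + 1) (by omega) (by omega)
    have hab := (hxmono n k hk1 (by omega)).le
    refine (abs_integral_abs_rpow_sub_le hp (hμ n) (hlampos n) hSdiff hS hSprod
      (hq01.mono_set (uIcc_subset_uIcc (Icc_subset_uIcc ha) (Icc_subset_uIcc hb))) hab
      (fun t ht => hphase n _ ha t ⟨ha.1.trans ht.1, ht.2.trans hb.2⟩)
      (hzero n k hk1 (by omega)) (hzero n (k + 1) (by omega) (by omega))).trans ?_
    exact div_le_div_of_nonneg_right (integral_mono_interval ha.1 hab hb.2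
      (Eventually.of_forall fun _ => abs_nonneg _) hq01.abs) (hlampos n).le
  have hgap : ∀ n : ℕ, 3 ≤ n → ((n : ℝ) - 2) * (pihat p / lam n ^ (1 / p)) ≤ 1 + K / lam n :=
    fun n hn => by
      simpa [abs_div, abs_of_pos (hlampos n), intervalIntegral.integral_div] using
        sub_two_mul_le_of_nodes hn (fun y => hS (lam n ^ (1 / p) * y))
          (hq01.div_const (lam n)) (hphase n) (hxmem n) (hxmono n) (hnode n)
  have hlim := tendsto_natCast_div_of_eventually_mul_le_rpow hp (div_pos (pihat_pos hp) four_pos)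
    hlampos (eventually_mul_natCast_le_rpow (pihat_pos hp) hlampos hlamtop hgap)
  refine ⟨⟨K, hnodal⟩, fun ε hε => ?_⟩
  obtain ⟨N, hN⟩ :=
    eventually_atTop.1 ((hlim.const_mul K).eventually (gt_mem_nhds (by simpa using hε)))
  refine ⟨N, fun n hn k hk1 hk2 => (hnodal n k hk1 hk2).trans ?_⟩
  have h := hN n hn
  rw [mul_div_assoc', div_lt_iff₀ (hlampos n)] at h
  rw [div_le_div_iff₀ (hlampos n) (by exact_mod_cast (by omega : 0 < n))]
  exact h.le

/-- the integrals of `φ_n = |S_p(λ_n^{1/p}θ_n)|^p - 1/p` over the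
nodal intervals are `O(1/λ_n) = o(1/n)`, uniformly in `k = 1, …, n-2`. -/
theorem phi_integral_small (p : ℝ) (hp : 1 < p) (S : ℝ → ℝ)
    (hSdiff : Differentiable ℝ S)
    (hSODE : ∀ x : ℝ, HasDerivAt (fun t => sgnPow (p - 1) (deriv S t))
      (-((p - 1) * sgnPow (p - 1) (S x))) x)
    (hS0 : S 0 = 0) (hS'0 : deriv S 0 = 1)
    (hSzero : ∀ k : ℤ, S (k * pihat p) = 0)
    (hSprod : ∀ x : ℝ, HasDerivAt (fun t => S t * sgnPow (p - 1) (deriv S t))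
      (1 - p * |S x| ^ p) x)
    (q : ℝ → ℝ) (hq : IntegrableOn q (Set.Ioo 0 1))
    (lam : ℕ → ℝ) (hlampos : ∀ n, 0 < lam n)
    (hlamO : ∃ C : ℝ, ∀ n : ℕ, (lam n) ^ (1 / p) ≤ C * n)
    (hlamtop : Tendsto lam atTop atTop)
    (θ : ℕ → ℝ → ℝ)
    (hphase : ∀ n : ℕ, ∀ a ∈ Set.Icc (0:ℝ) 1, ∀ b ∈ Set.Icc (0:ℝ) 1,
      θ n b - θ n a =
        ∫ t in a..b, (1 - q t / lam n * |S ((lam n) ^ (1 / p) * θ n t)| ^ p))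
    (x : ℕ → ℕ → ℝ)
    (hxmem : ∀ n : ℕ, ∀ k : ℕ, 1 ≤ k → k ≤ n - 1 → x n k ∈ Set.Icc (0:ℝ) 1)
    (hxmono : ∀ n : ℕ, ∀ k : ℕ, 1 ≤ k → k + 1 ≤ n - 1 → x n k < x n (k + 1))
    (hxnode : ∀ n : ℕ, ∀ k : ℕ, 1 ≤ k → k ≤ n - 1 →
      θ n (x n k) = k * pihat p / (lam n) ^ (1 / p)) :
    (∃ C : ℝ, ∀ n : ℕ, ∀ k : ℕ, 1 ≤ k → k ≤ n - 2 →
      |∫ t in (x n k)..(x n (k + 1)),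
          (|S ((lam n) ^ (1 / p) * θ n t)| ^ p - 1 / p)| ≤ C / lam n) ∧
    (∀ ε > 0, ∃ N : ℕ, ∀ n ≥ N, ∀ k : ℕ, 1 ≤ k → k ≤ n - 2 →
      |∫ t in (x n k)..(x n (k + 1)),
          (|S ((lam n) ^ (1 / p) * θ n t)| ^ p - 1 / p)| ≤ ε / n) :=
  phi_integral_small_general p hp S hSdiff hSODE hSzero hSprod q hq lam hlampos hlamtop θ hphase x
    hxmem hxmono hxnode
end
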